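/- arXiv:math/0610620 — 2 statements merged into one kernel-verified Lean document; each statement's English description precedes it below -/
import Mathlib

section
/- Let $1 \le p < \infty$, $n \ge 1$, $t_j = j/(2n)$ for $j=0,\dots,2n-1$, and let $x_0, \dots, x_{n-1}$ be vectors in a normed space $E$. Define $f = \sum_{k=0}^{n-1} \mathbf{1}_{(t_{2k}, t_{2k+1}]} x_k$ and for $h \in \mathbb{R}$ let $(T(h)f)(t) = f(t+h)$. Then for every $t$ with $0 < t < (2n)^{-1}$ and every $h$ with $|h| \le t$ one has $\|T(h)f - f\|_{L^p(\mathbb{R};E)}^p \le 2t \sum_{k=0}^{n-1} \|x_k\|^p$. -/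
/-!
The intervals $(t_{2k}, t_{2k+1}]$ lie at distance at least $(2n)^{-1} > |h|$ from each other, so
for every $s$ at most one summand of $f(s+h) - f(s)$ is nonzero and $\|f(s+h) - f(s)\|^p$ splits
into a sum over $k$. The $k$-th summand is $\pm x_k$ exactly on the symmetric difference of the
$k$-th interval and its translate by $-h$, a set of measure at most $2|h|$.
-/

open MeasureTheory Set Finset
open scoped symmDiff

theorem norm_indicator_const_add_sub_rpow {α E : Type*} [Add α] [SeminormedAddCommGroup E]
    {p : ℝ} (hp : p ≠ 0) (A : Set α) (c : E) (s h : α) :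
    ‖A.indicator (fun _ => c) (s + h) - A.indicator (fun _ => c) s‖ ^ p =
      (((· + h) ⁻¹' A) ∆ A).indicator (fun _ => ‖c‖ ^ p) s := by
  by_cases hsh : s + h ∈ A <;> by_cases hs : s ∈ A <;>
    simp [hsh, hs, mem_symmDiff, hp]

theorem preimage_add_const_Ioc_symmDiff_subset (a b h : ℝ) :
    ((· + h) ⁻¹' Ioc a b) ∆ Ioc a b ⊆ uIoc (a - h) a ∪ uIoc (b - h) b := by
  intro s hs
  simp only [preimage_add_const_Ioc, mem_symmDiff, Set.mem_Ioc, Set.mem_union,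
    Set.mem_uIoc] at hs ⊢
  grind

theorem volume_preimage_add_const_Ioc_symmDiff_le (a b h : ℝ) :
    volume (((· + h) ⁻¹' Ioc a b) ∆ Ioc a b) ≤ ENNReal.ofReal (2 * |h|) :=
  calc volume (((· + h) ⁻¹' Ioc a b) ∆ Ioc a b)
      ≤ volume (uIoc (a - h) a ∪ uIoc (b - h) b) :=
        measure_mono (preimage_add_const_Ioc_symmDiff_subset a b h)
    _ ≤ volume (uIoc (a - h) a) + volume (uIoc (b - h) b) := measure_union_le _ _
    _ = ENNReal.ofReal (2 * |h|) := by
        rw [Real.volume_uIoc, Real.volume_uIoc, sub_sub_cancel, sub_sub_cancel,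
          ← ENNReal.ofReal_add (abs_nonneg h) (abs_nonneg h), two_mul]

theorem norm_sum_rpow_of_subsingleton_support {ι E : Type*} [Fintype ι]
    [SeminormedAddCommGroup E] {p : ℝ} (hp : p ≠ 0) (g : ι → E)
    (hg : ∀ j k, g j ≠ 0 → g k ≠ 0 → j = k) :
    ‖∑ k, g k‖ ^ p = ∑ k, ‖g k‖ ^ p := by
  by_cases hzero : ∀ k, g k = 0
  · simp [hzero, hp]
  · obtain ⟨i, hi⟩ := not_forall.mp hzero
    have hother : ∀ k, k ≠ i → g k = 0 := fun k hki => by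
      by_contra hk; exact hki (hg k i hk hi)
    rw [Finset.sum_eq_single i (fun k _ hk => hother k hk) (by simp),
      Finset.sum_eq_single i (fun k _ hk => by simp [hother k hk, hp]) (by simp)]

noncomputable def intervalStepFun {ι E : Type*} [Fintype ι] [AddCommMonoid E] (a b : ι → ℝ)
    (x : ι → E) (s : ℝ) : E :=
  ∑ k, (Ioc (a k) (b k)).indicator (fun _ => x k) s

theorem integral_norm_intervalStepFun_add_sub_rpow_le {ι E : Type*} [Fintype ι]
    [SeminormedAddCommGroup E] {p : ℝ} (hp : p ≠ 0) (a b : ι → ℝ) (x : ι → E) (h : ℝ)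
    (hsep : ∀ j k, j ≠ k →
      ∀ u ∈ Ioc (a j) (b j), ∀ v ∈ Ioc (a k) (b k), |h| < |u - v|) :
    ∫ s, ‖intervalStepFun a b x (s + h) - intervalStepFun a b x s‖ ^ p ≤
      2 * |h| * ∑ k, ‖x k‖ ^ p := by
  set D : ι → Set ℝ := fun k => ((· + h) ⁻¹' Ioc (a k) (b k)) ∆ Ioc (a k) (b k)
  have hD : ∀ k, volume (D k) ≤ ENNReal.ofReal (2 * |h|) := fun k =>
    volume_preimage_add_const_Ioc_symmDiff_le _ _ h
  have hint : ∀ k, Integrable ((D k).indicator fun _ => ‖x k‖ ^ p) := fun k =>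
    (integrable_indicator_iff (by measurability)).mpr
      (integrableOn_const ((hD k).trans_lt ENNReal.ofReal_lt_top).ne)
  have hpoint : ∀ s, ‖intervalStepFun a b x (s + h) - intervalStepFun a b x s‖ ^ p =
      ∑ k, (D k).indicator (fun _ => ‖x k‖ ^ p) s := by
    intro s
    rw [intervalStepFun, intervalStepFun, ← Finset.sum_sub_distrib,
      norm_sum_rpow_of_subsingleton_support hp]
    · exact Finset.sum_congr rfl fun k _ => norm_indicator_const_add_sub_rpow hp _ _ s h
    · intro j k hj hk
      by_contra hjk
      have hmem : ∀ i, (Ioc (a i) (b i)).indicator (fun _ => x i) (s + h) -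
          (Ioc (a i) (b i)).indicator (fun _ => x i) s ≠ 0 →
            s + h ∈ Ioc (a i) (b i) ∨ s ∈ Ioc (a i) (b i) := fun i hi => by
        contrapose! hi
        simp [hi.1, hi.2]
      -- the two points taken from `{s, s + h}` are at distance `0` or `|h|`
      rcases hmem j hj with hu | hu <;> rcases hmem k hk with hv | hv <;>
        have hlt := hsep j k hjk _ hu _ hv <;> simp at hlt <;> linarith [abs_nonneg h]
  simp_rw [hpoint]
  rw [integral_finsetSum _ fun k _ => hint k, Finset.mul_sum]
  refine Finset.sum_le_sum fun k _ => ?_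
  rw [integral_indicator_const _ (by measurability), smul_eq_mul]
  gcongr
  exact ENNReal.toReal_le_of_le_ofReal (by positivity) (hD k)

theorem inv_lt_abs_sub_of_mem_Ioc_div {c : ℝ} (hc : 0 ≤ c) {j k : ℕ} (hjk : j ≠ k)
    {u v : ℝ} (hu : u ∈ Ioc ((2 * j : ℕ) / c) ((2 * j + 1 : ℕ) / c))
    (hv : v ∈ Ioc ((2 * k : ℕ) / c) ((2 * k + 1 : ℕ) / c)) :
    c⁻¹ < |u - v| := by
  wlog hlt : j < k generalizing j k u v
  · rw [abs_sub_comm]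
    exact this hjk.symm hv hu (by omega)
  have hgap : ((2 * j + 1 : ℕ) : ℝ) / c + c⁻¹ ≤ (2 * k : ℕ) / c := by
    rw [inv_eq_one_div, ← add_div]
    exact div_le_div_of_nonneg_right (by exact_mod_cast (by omega : 2 * j + 1 + 1 ≤ 2 * k)) hc
  calc c⁻¹ < v - u := by linarith [hu.2, hv.1]
    _ ≤ |u - v| := by rw [abs_sub_comm]; exact le_abs_self _

theorem stmt_1_general (p : ℝ) (hp : 1 ≤ p) (n : ℕ)
    (E : Type*) [NormedAddCommGroup E] (x : Fin n → E)
    (ts : ℕ → ℝ) (hts : ∀ j, ts j = j / (2 * n))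
    (f : ℝ → E)
    (hf : ∀ s, f s = ∑ k : Fin n,
      Set.indicator (Set.Ioc (ts (2 * k)) (ts (2 * k + 1))) (fun _ => x k) s)
    (t h : ℝ) (ht1 : t < (2 * n : ℝ)⁻¹) (hh : |h| ≤ t) :
    (∫ s, ‖f (s + h) - f s‖ ^ p) ≤ 2 * t * ∑ k : Fin n, ‖x k‖ ^ p := by
  obtain rfl : f = intervalStepFun (fun k : Fin n => ts (2 * k)) (fun k => ts (2 * k + 1)) x :=
    funext hf
  have hsep : ∀ j k : Fin n, j ≠ k → ∀ u ∈ Ioc (ts (2 * j)) (ts (2 * j + 1)),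
      ∀ v ∈ Ioc (ts (2 * k)) (ts (2 * k + 1)), |h| < |u - v| := by
    intro j k hjk u hu v hv
    rw [hts, hts] at hu hv
    exact hh.trans_lt (ht1.trans (inv_lt_abs_sub_of_mem_Ioc_div (by positivity)
      (Fin.val_injective.ne hjk) hu hv))
  calc _ ≤ 2 * |h| * ∑ k, ‖x k‖ ^ p :=
        integral_norm_intervalStepFun_add_sub_rpow_le (zero_lt_one.trans_le hp).ne' _ _ x h hsep
    _ ≤ 2 * t * ∑ k, ‖x k‖ ^ p := by gcongr

theorem stmt_1 (p : ℝ) (hp : 1 ≤ p) (n : ℕ) (hn : 1 ≤ n)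
    (E : Type*) [NormedAddCommGroup E] (x : Fin n → E)
    (ts : ℕ → ℝ) (hts : ∀ j, ts j = j / (2 * n))
    (f : ℝ → E)
    (hf : ∀ s, f s = ∑ k : Fin n,
      Set.indicator (Set.Ioc (ts (2 * k)) (ts (2 * k + 1))) (fun _ => x k) s)
    (t h : ℝ) (ht0 : 0 < t) (ht1 : t < (2 * n : ℝ)⁻¹) (hh : |h| ≤ t) :
    (∫ s, ‖f (s + h) - f s‖ ^ p) ≤ 2 * t * ∑ k : Fin n, ‖x k‖ ^ p :=
  stmt_1_general p hp n E x ts hts f hf t h ht1 hh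
end

section
/- Let $r > 1$, $c = \sum_{i\ge 1} i^{-r}$, $t_0 = 0$, $t_k = c^{-1}\sum_{i=1}^k i^{-r}$, and let $0 < \alpha \le 1$. With $g_n$ as in the construction ($g_n(t) = (1 - \frac{|2t-t_k-t_{k-1}|}{t_k-t_{k-1}}) e_k$ on $(t_{k-1},t_k]$, $g_n = 0$ elsewhere), for all $s, t \in (t_{k-1}, t_k]$ with $1 \le k \le n$ one has $\|g_n(t) - g_n(s)\|_{\ell^p_n} \le \frac{2|t-s|^{\alpha}}{(t_n - t_{n-1})^{\alpha}}$. -/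
/-!
On `(t_{k-1}, t_k]` only the `k`-th coordinate of `g_n` is nonzero and it is a tent of slope
`2 / (t_k - t_{k-1})`, so the `ℓ^p` distance is Lipschitz with that constant. Because `|t - s|`
is at most the interval length and `α ≤ 1`, this improves to the Hölder bound with
`(t_k - t_{k-1})^α` in the denominator, and the interval lengths decrease in `k`.
-/

open Finset Set

noncomputable def tent (a b x : ℝ) : ℝ := 1 - |2 * x - b - a| / (b - a)

lemma abs_tent_sub_tent_le {a b : ℝ} (hab : a < b) (s t : ℝ) :
    |tent a b t - tent a b s| ≤ 2 * |t - s| / (b - a) := by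
  have hba : 0 < b - a := sub_pos.2 hab
  have hdiff : tent a b t - tent a b s = (|2 * s - b - a| - |2 * t - b - a|) / (b - a) := by
    unfold tent
    ring
  rw [hdiff, abs_div, abs_of_pos hba]
  gcongr
  calc |(|2 * s - b - a| - |2 * t - b - a|)|
      ≤ |(2 * s - b - a) - (2 * t - b - a)| := abs_abs_sub_abs_le_abs_sub _ _
    _ = 2 * |t - s| := by
      rw [show (2 * s - b - a) - (2 * t - b - a) = 2 * (s - t) by ring, abs_mul, abs_sub_comm]
      norm_num

lemma div_le_rpow_div_rpow {x d D α : ℝ} (hx : 0 ≤ x) (hxd : x ≤ d) (hD : 0 < D) (hDd : D ≤ d)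
    (hα0 : 0 < α) (hα1 : α ≤ 1) : x / d ≤ x ^ α / D ^ α := by
  have hd : 0 < d := hD.trans_le hDd
  calc x / d ≤ (x / d) ^ α :=
        Real.self_le_rpow_of_le_one (div_nonneg hx hd.le) ((div_le_one hd).2 hxd) hα1
    _ = x ^ α / d ^ α := Real.div_rpow hx hd.le α
    _ ≤ x ^ α / D ^ α := by gcongr

lemma sum_abs_rpow_rpow_one_div_of_eq_zero {ι : Type*} [Fintype ι] {p : ℝ} (hp : 0 < p)
    {v : ι → ℝ} (i : ι) (hv : ∀ j ≠ i, v j = 0) :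
    (∑ j, |v j| ^ p) ^ (1 / p) = |v i| := by
  rw [Finset.sum_eq_single_of_mem i (Finset.mem_univ i)
      (fun j _ hj => by rw [hv j hj, abs_zero, Real.zero_rpow hp.ne']),
    ← Real.rpow_mul (abs_nonneg _), mul_one_div_cancel hp.ne', Real.rpow_one]

lemma sum_indicator_tent_smul_single_apply {ts : ℕ → ℝ} (hts : Monotone ts) {n m : ℕ} {x : ℝ}
    (hx : x ∈ Ioc (ts m) (ts (m + 1))) (j : Fin n) :
    (∑ k : Fin n, (Ioc (ts k) (ts (k + 1))).indicator (tent (ts k) (ts (k + 1))) x •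
      (Pi.single k 1 : Fin n → ℝ)) j = if (j : ℕ) = m then tent (ts m) (ts (m + 1)) x else 0 := by
  simp only [Finset.sum_apply, Pi.smul_apply, Pi.single_apply, smul_eq_mul, mul_ite, mul_one,
    mul_zero, Finset.sum_ite_eq, Finset.mem_univ, if_true]
  split_ifs with hjm
  · subst hjm
    exact indicator_of_mem hx _
  · exact indicator_of_notMem (fun hxj =>
      (hts.pairwise_disjoint_on_Ioc_succ hjm).le_bot ⟨hxj, hx⟩) _

section PartialSums

variable {r c : ℝ} {ts : ℕ → ℝ}
  (hts : ∀ k, ts k = c⁻¹ * ∑ i ∈ Finset.range k, ((i : ℝ) + 1) ^ (-r))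
include hts

lemma succ_sub_eq_of_partialSums (m : ℕ) : ts (m + 1) - ts m = c⁻¹ * ((m : ℝ) + 1) ^ (-r) := by
  rw [hts, hts, Finset.sum_range_succ]
  ring

lemma inv_pos_of_partialSums_lt {m : ℕ} (h : ts m < ts (m + 1)) : 0 < c⁻¹ := by
  rw [← sub_pos, succ_sub_eq_of_partialSums hts] at h
  exact pos_of_mul_pos_left h (by positivity)

lemma succ_sub_pos_of_partialSums (hc : 0 < c⁻¹) (m : ℕ) : 0 < ts (m + 1) - ts m := by
  rw [succ_sub_eq_of_partialSums hts]
  positivity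

lemma monotone_of_partialSums (hc : 0 < c⁻¹) : Monotone ts :=
  monotone_nat_of_le_succ fun m => (sub_pos.1 (succ_sub_pos_of_partialSums hts hc m)).le

lemma succ_sub_le_of_partialSums (hc : 0 < c⁻¹) (hr : 0 ≤ r) {m N : ℕ} (hmN : m ≤ N) :
    ts (N + 1) - ts N ≤ ts (m + 1) - ts m := by
  rw [succ_sub_eq_of_partialSums hts, succ_sub_eq_of_partialSums hts]
  exact mul_le_mul_of_nonneg_left
    ( Real.rpow_le_rpow_of_nonpos (by positivity) (by gcongr) (neg_nonpos.2 hr)) hc.le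

end PartialSums

theorem stmt_6_general (r : ℝ) (hr : 1 < r)
    (c : ℝ)
    (ts : ℕ → ℝ) (hts : ∀ k, ts k = c⁻¹ * ∑ i ∈ Finset.range k, ((i : ℝ) + 1) ^ (-r))
    (α : ℝ) (hα0 : 0 < α) (hα1 : α ≤ 1)
    (p : ℝ) (hp : 1 ≤ p) (n : ℕ)
    (g : ℝ → Fin n → ℝ)
    (hg : ∀ t, g t = ∑ k : Fin n,
      Set.indicator (Set.Ioc (ts k) (ts (k + 1)))
        (fun s => 1 - |2 * s - ts (k + 1) - ts k| / (ts (k + 1) - ts k)) t •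
        (Pi.single k 1 : Fin n → ℝ)) :
    ∀ k : ℕ, 1 ≤ k → k ≤ n →
      ∀ s ∈ Set.Ioc (ts (k - 1)) (ts k), ∀ t ∈ Set.Ioc (ts (k - 1)) (ts k),
        (∑ j : Fin n, |g t j - g s j| ^ p) ^ (1 / p) ≤
          2 * |t - s| ^ α / (ts n - ts (n - 1)) ^ α := by
  intro k hk hkn s hs t ht
  obtain ⟨m, rfl⟩ := Nat.exists_eq_add_of_le' hk
  obtain ⟨N, rfl⟩ := Nat.exists_eq_add_of_le' (hk.trans hkn)
  simp only [Nat.add_sub_cancel] at hs ht ⊢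
  -- The interval containing `s` is nonempty, which forces the normalising constant to be positive.
  have hc : 0 < c⁻¹ := inv_pos_of_partialSums_lt hts (hs.1.trans_le hs.2)
  have hgx (x) (hx : x ∈ Ioc (ts m) (ts (m + 1))) (j : Fin (N + 1)) :
      g x j = if (j : ℕ) = m then tent (ts m) (ts (m + 1)) x else 0 := by
    rw [hg]
    exact sum_indicator_tent_smul_single_apply (monotone_of_partialSums hts hc) hx j
  have hdist : |t - s| ≤ ts (m + 1) - ts m :=
    abs_sub_le_iff.2 ⟨by linarith [ht.2, hs.1], by linarith [hs.2, ht.1]⟩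
  calc (∑ j, |g t j - g s j| ^ p) ^ (1 / p)
      = |tent (ts m) (ts (m + 1)) t - tent (ts m) (ts (m + 1)) s| := by
        rw [sum_abs_rpow_rpow_one_div_of_eq_zero (by linarith) (⟨m, by omega⟩ : Fin (N + 1))
          fun j hj => by
            have hjm : (j : ℕ) ≠ m := fun h => hj (Fin.ext h)
            simp [hgx t ht, hgx s hs, hjm]]
        simp [hgx t ht, hgx s hs]
    _ ≤ 2 * |t - s| / (ts (m + 1) - ts m) := abs_tent_sub_tent_le (hs.1.trans_le hs.2) s t
    _ ≤ 2 * |t - s| ^ α / (ts (N + 1) - ts N) ^ α := by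
        rw [mul_div_assoc, mul_div_assoc]
        refine mul_le_mul_of_nonneg_left ?_ zero_le_two
        exact div_le_rpow_div_rpow (abs_nonneg _) hdist (succ_sub_pos_of_partialSums hts hc N)
          (succ_sub_le_of_partialSums hts hc (by linarith) (by omega)) hα0 hα1

theorem stmt_6 (r : ℝ) (hr : 1 < r)
    (c : ℝ) (hc : c = ∑' i : ℕ, ((i : ℝ) + 1) ^ (-r))
    (ts : ℕ → ℝ) (hts : ∀ k, ts k = c⁻¹ * ∑ i ∈ Finset.range k, ((i : ℝ) + 1) ^ (-r))
    (α : ℝ) (hα0 : 0 < α) (hα1 : α ≤ 1)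
    (p : ℝ) (hp : 1 ≤ p) (n : ℕ) (hn : 1 ≤ n)
    (g : ℝ → Fin n → ℝ)
    (hg : ∀ t, g t = ∑ k : Fin n,
      Set.indicator (Set.Ioc (ts k) (ts (k + 1)))
        (fun s => 1 - |2 * s - ts (k + 1) - ts k| / (ts (k + 1) - ts k)) t •
        (Pi.single k 1 : Fin n → ℝ)) :
    ∀ k : ℕ, 1 ≤ k → k ≤ n →
      ∀ s ∈ Set.Ioc (ts (k - 1)) (ts k), ∀ t ∈ Set.Ioc (ts (k - 1)) (ts k),
        (∑ j : Fin n, |g t j - g s j| ^ p) ^ (1 / p) ≤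
          2 * |t - s| ^ α / (ts n - ts (n - 1)) ^ α :=
  stmt_6_general r hr c ts hts α hα0 hα1 p hp n g hg
end
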